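/- Let V : ℝ≥0 → ℝ≥0 satisfy the differential inequality dV/dt ≤ -k c₁ V^{γ₁} with k, c₁ > 0 and 0 < γ₁ < 1. Then V(t) = 0 for all t ≥ V(0)^{1-γ₁}/(k c₁ (1-γ₁)); i.e., V reaches zero in finite time. -/

import Mathlib

/-!
Along a trajectory on which `V > 0`, the inequality `V' ≤ -c V^γ` makes
`V ^ (1 - γ) + c (1 - γ) t` nonincreasing, since its derivative is
`(1 - γ) V^(-γ) V' + c (1 - γ) ≤ 0`. If `V t > 0`, then `V > 0` on all of `[0, t]` (as `V` is
nonincreasing), so `c (1 - γ) t < V 0 ^ (1 - γ)`, i.e. `t` lies before the settling time.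
-/

open Set Real

theorem antitoneOn_of_hasDerivAt_nonpos {D : Set ℝ} (hD : Convex ℝ D) {f f' : ℝ → ℝ}
    (hf : ∀ x ∈ D, HasDerivAt f (f' x) x) (hf' : ∀ x ∈ D, f' x ≤ 0) : AntitoneOn f D :=
  antitoneOn_of_hasDerivWithinAt_nonpos hD
    (fun x hx => (hf x hx).continuousAt.continuousWithinAt)
    (fun x hx => (hf x (interior_subset hx)).hasDerivWithinAt)
    (fun x hx => hf' x (interior_subset hx))

theorem antitoneOn_rpow_add_mul_of_hasDerivAt_le {D : Set ℝ} (hD : Convex ℝ D) {f f' : ℝ → ℝ}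
    {c γ : ℝ} (hγ : γ ≤ 1) (hf : ∀ x ∈ D, HasDerivAt f (f' x) x) (hpos : ∀ x ∈ D, 0 < f x)
    (hineq : ∀ x ∈ D, f' x ≤ -c * f x ^ γ) :
    AntitoneOn (fun x => f x ^ (1 - γ) + c * (1 - γ) * x) D := by
  refine antitoneOn_of_hasDerivAt_nonpos hD
    (fun x hx => ((hf x hx).rpow_const (Or.inl (hpos x hx).ne')).add
      ((hasDerivAt_id x).const_mul (c * (1 - γ)))) fun x hx => ?_
  have hfx := hpos x hx
  have hcancel : f x ^ γ * f x ^ (1 - γ - 1) = 1 := by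
    rw [sub_sub_cancel_left, rpow_neg hfx.le, mul_inv_cancel₀ (rpow_pos_of_pos hfx γ).ne']
  calc f' x * (1 - γ) * f x ^ (1 - γ - 1) + c * (1 - γ) * 1
      ≤ -c * f x ^ γ * (1 - γ) * f x ^ (1 - γ - 1) + c * (1 - γ) * 1 := by
        gcongr
        exact hineq x hx
    _ = 0 := by linear_combination (-c * (1 - γ)) * hcancel

theorem sublinear_finite_time_general (V V' : ℝ → ℝ) (k c₁ γ₁ : ℝ)
    (hk : 0 < k) (hc₁ : 0 < c₁) (hγ₁' : γ₁ < 1)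
    (hVnonneg : ∀ t, 0 ≤ t → 0 ≤ V t)
    (hderiv : ∀ t, 0 ≤ t → HasDerivAt V (V' t) t)
    (hineq : ∀ t, 0 ≤ t → V' t ≤ -k * c₁ * (V t) ^ γ₁) :
    ∀ t : ℝ, (V 0) ^ (1 - γ₁) / (k * c₁ * (1 - γ₁)) ≤ t → V t = 0 := by
  intro t ht
  have hrate : 0 < k * c₁ * (1 - γ₁) := mul_pos (mul_pos hk hc₁) (sub_pos.mpr hγ₁')
  have ht0 : 0 ≤ t := (div_nonneg (rpow_nonneg (hVnonneg 0 le_rfl) _) hrate.le).trans ht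
  by_contra hVt_ne
  have hVt : 0 < V t := (hVnonneg t ht0).lt_of_ne' hVt_ne
  have hVanti : AntitoneOn V (Icc 0 t) :=
    antitoneOn_of_hasDerivAt_nonpos (convex_Icc 0 t) (fun s hs => hderiv s hs.1) fun s hs => by
      have := rpow_nonneg (hVnonneg s hs.1) γ₁
      nlinarith [hineq s hs.1]
  have hVpos : ∀ s ∈ Icc 0 t, 0 < V s := fun s hs => hVt.trans_le (hVanti hs ⟨ht0, le_rfl⟩ hs.2)
  have hdecay := antitoneOn_rpow_add_mul_of_hasDerivAt_le (c := k * c₁) (convex_Icc 0 t) hγ₁'.le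
    (fun s hs => hderiv s hs.1) hVpos (fun s hs => (hineq s hs.1).trans_eq (by ring))
    ⟨le_rfl, ht0⟩ ⟨ht0, le_rfl⟩ ht0
  simp only [mul_zero, add_zero] at hdecay
  rw [div_le_iff₀ hrate] at ht
  linarith [rpow_pos_of_pos hVt (1 - γ₁)]

theorem sublinear_finite_time (V V' : ℝ → ℝ) (k c₁ γ₁ : ℝ)
    (hk : 0 < k) (hc₁ : 0 < c₁) (hγ₁ : 0 < γ₁) (hγ₁' : γ₁ < 1)
    (hVnonneg : ∀ t, 0 ≤ t → 0 ≤ V t)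
    (hderiv : ∀ t, 0 ≤ t → HasDerivAt V (V' t) t)
    (hineq : ∀ t, 0 ≤ t → V' t ≤ -k * c₁ * (V t) ^ γ₁) :
    ∀ t : ℝ, (V 0) ^ (1 - γ₁) / (k * c₁ * (1 - γ₁)) ≤ t → V t = 0 :=
  sublinear_finite_time_general V V' k c₁ γ₁ hk hc₁ hγ₁' hVnonneg hderiv hineq
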